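/- For each integer n ≥ 0, all nonempty finite sets of formulae X₁, …, Xₙ, every coalition C, and every sacrifice function s: ⊢ ⋀_{i≤n} ⟪C:Xᵢ⟫_s → ⟪C:X₁⊗X₂⊗⋯⊗Xₙ⟫_s, where X₁⊗⋯⊗Xₙ denotes (⋯((X₁⊗X₂)⊗X₃)⋯)⊗Xₙ for n > 2, is X₁ for n = 1, and is the singleton set {⊤} for n = 0. -/

import Mathlib

/-- Formulas of the language Φ, over a set `A` of agents, with propositional
variables indexed by `ℕ`.  `dil C X s` is the ethical-dilemma modality `[C:X]_s`,
where the finite set `X` of formulae is represented by a list. -/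
inductive Fm (A : Type) : Type
  | var : ℕ → Fm A
  | neg : Fm A → Fm A
  | imp : Fm A → Fm A → Fm A
  | dil : Set A → List (Fm A) → (A → ℝ) → Fm A

namespace Fm

variable {A : Type}

/-- Truth ⊤. -/
def top : Fm A := imp (var 0) (var 0)

/-- Falsehood ⊥. -/
def bot : Fm A := neg top

/-- Conjunction, defined as usual. -/
def conj (φ ψ : Fm A) : Fm A := neg (imp φ (neg ψ))

/-- Disjunction, defined as usual. -/
def disj (φ ψ : Fm A) : Fm A := imp (neg φ) ψ

/-- Disjunction of all formulae in a list (`∨∅ = ⊥`). -/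
def bigOr : List (Fm A) → Fm A
  | [] => bot
  | φ :: rest => disj φ (bigOr rest)

/-- Conjunction of all formulae in a list (`∧∅ = ⊤`). -/
def bigAnd : List (Fm A) → Fm A
  | [] => top
  | φ :: rest => conj φ (bigAnd rest)

/-- `X ⊗ Y = {φ ∧ ψ | φ ∈ X, ψ ∈ Y}`. -/
def otimes (X Y : List (Fm A)) : List (Fm A) :=
  X.flatMap fun φ => Y.map fun ψ => conj φ ψ

/-- `X₁ ⊗ X₂ ⊗ ⋯ ⊗ Xₙ`, which is `{⊤}` for `n = 0` and `X₁` for `n = 1`. -/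
def bigOtimes : List (List (Fm A)) → List (Fm A)
  | [] => [top]
  | X :: rest => rest.foldl otimes X

/-- The weak dilemma `⟪C:X⟫_s`, i.e. the disjunction `⋁_{∅ ≠ Z ⊆ X} [C:Z]_s`. -/
def wdil (C : Set A) (X : List (Fm A)) (s : A → ℝ) : Fm A :=
  bigOr (((X.sublists).filter fun Z => !Z.isEmpty).map fun Z => dil C Z s)

/-- A propositional tautology in the language Φ: a formula that evaluates to true
under every Boolean valuation that respects negation and implication (treating
variables and dilemma formulae as atoms). -/
def Tautology (φ : Fm A) : Prop :=
  ∀ v : Fm A → Bool,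
    (∀ ψ, v (neg ψ) = !v ψ) →
    (∀ ψ χ, v (imp ψ χ) = (!v ψ || v χ)) →
    v φ = true

/-- Derivability `⊢ φ` in the logical system: all propositional tautologies,
the Combination, Monotonicity, Minimality and No Alternatives axioms, and the
Modus Ponens, Necessitation and Substitution inference rules. -/
inductive Derives : Fm A → Prop
  | taut {φ : Fm A} : Tautology φ → Derives φ
  | comb {C : Set A} {X Y : List (Fm A)} {s : A → ℝ} :
      C.Nonempty → X ≠ [] → Y ≠ [] →
      Derives (imp (dil C X s) (imp (dil C Y s) (wdil C (otimes X Y) s)))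
  | mono {C D : Set A} {X : List (Fm A)} {s s' : A → ℝ} :
      C.Nonempty → C ⊆ D → X ≠ [] → (∀ a, s a ≤ s' a) →
      Derives (imp (dil C X s') (wdil D X s))
  | minim {C : Set A} {X Y : List (Fm A)} {s : A → ℝ} :
      C.Nonempty → Y ≠ [] → {ψ | ψ ∈ Y} ⊂ {ψ | ψ ∈ X} →
      Derives (imp (dil C X s) (neg (dil C Y s)))
  | noalt {C D : Set A} {X : List (Fm A)} {s : A → ℝ} :
      C.Nonempty → D.Nonempty → (∃ φ, {ψ | ψ ∈ X} = {φ}) →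
      Derives (imp (dil C X s) (dil D X s))
  | mp {φ ψ : Fm A} : Derives φ → Derives (imp φ ψ) → Derives ψ
  | nec {φ : Fm A} {C : Set A} {s : A → ℝ} :
      C.Nonempty → Derives φ → Derives (dil C [φ] s)
  | subst {C : Set A} {X : List (Fm A)} {s : A → ℝ} {τ : Fm A → Fm A} :
      C.Nonempty → X ≠ [] → (∀ φ ∈ X, Derives (imp φ (τ φ))) →
      Derives (imp (dil C X s) (wdil C (X.map τ) s))

/-- `Γ ⊢ φ`: provable from the theorems of the system and the additional set of
formulae `Γ` using the Modus Ponens inference rule only. -/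
inductive DerivesFrom (Γ : Set (Fm A)) : Fm A → Prop
  | thm {φ : Fm A} : Derives φ → DerivesFrom Γ φ
  | hyp {φ : Fm A} : φ ∈ Γ → DerivesFrom Γ φ
  | mp {φ ψ : Fm A} : DerivesFrom Γ φ → DerivesFrom Γ (imp φ ψ) → DerivesFrom Γ ψ

end Fm

/-- A game `(W, Δ, |·|, M, π)`. -/
structure Game (A : Type) where
  /-- the set of states -/
  W : Type
  /-- the nonempty set Δ of actions -/
  St : Type
  st_nonempty : Nonempty St
  /-- `cost d a w` is the cost `|d|ᵃ_w` of action `d` for agent `a` in state `w` -/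
  cost : St → A → W → ℝ
  /-- the mechanism `M ⊆ W × Δ^𝒜 × W` -/
  M : W → (A → St) → W → Prop
  /-- valuation of propositional variables -/
  pi : ℕ → Set W

namespace Game

variable {A : Type}

/-- Satisfaction `w ⊩ φ` (as `Sat G φ w`). -/
def Sat (G : Game A) : Fm A → G.W → Prop
  | .var p, w => w ∈ G.pi p
  | .neg φ, w => ¬ Sat G φ w
  | .imp φ ψ, w => ¬ Sat G φ w ∨ Sat G ψ w
  | .dil C X s, w =>
      (∀ t : ↥C → G.St, ∃ φ, ∃ _ : φ ∈ X,
          ∀ (δ : A → G.St) (u : G.W),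
            (∀ a : A, G.cost (δ a) a w ≤ s a) → (∀ a : ↥C, t a = δ a.1) →
            G.M w δ u → Sat G φ u) ∧
      (∀ Y : Set (Fm A), Y.Nonempty → Y ⊂ {ψ | ψ ∈ X} →
          ∃ t : ↥C → G.St, ∀ φ, ∀ _ : φ ∈ Y,
            ∃ (δ : A → G.St) (u : G.W),
              (∀ a : A, G.cost (δ a) a w ≤ s a) ∧ (∀ a : ↥C, t a = δ a.1) ∧
              G.M w δ u ∧ ¬ Sat G φ u)
termination_by φ _ => sizeOf φ
decreasing_by
  all_goals
    first
      | (simp <;> omega)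
      | (have h1 : sizeOf φ < sizeOf X := List.sizeOf_lt_of_mem ‹φ ∈ X›
         simp <;> omega)
      | (have hX : φ ∈ X := by
           have := (‹Y ⊂ {ψ | ψ ∈ X}›.1) ‹φ ∈ Y›
           simpa using this
         have h1 : sizeOf φ < sizeOf X := List.sizeOf_lt_of_mem hX
         simp <;> omega)

end Game

namespace Fm

variable {A : Type}

/-- A set of formulae is consistent if ⊥ is not provable from it. -/
def Consistent (Γ : Set (Fm A)) : Prop := ¬ DerivesFrom Γ bot

/-- A maximal consistent set of formulae. -/
def MCS (Γ : Set (Fm A)) : Prop :=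
  Consistent Γ ∧ ∀ φ : Fm A, φ ∉ Γ → ¬ Consistent (insert φ Γ)

end Fm

/-- The canonical game: states are maximal consistent sets, actions are pairs
`(Ψ, c)` of a set of "demanded" formulae and an offered price `c`. -/
def canonicalGame (A : Type) : Game A where
  W := {Γ : Set (Fm A) // Fm.MCS Γ}
  St := Set (Fm A) × ℝ
  st_nonempty := ⟨(∅, 0)⟩
  cost := fun d _ _ => d.2
  M := fun w δ u =>
    (∀ a : A, (δ a).1 ⊆ u.1) ∧
    ∀ (C : Set A) (X : List (Fm A)) (s : A → ℝ),
      C.Nonempty → X ≠ [] → Fm.wdil C X s ∈ w.1 → (∀ a : A, (δ a).2 ≤ s a) →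
      ∃ a ∈ C, ∃ φ ∈ (δ a).1, φ ∈ X
  pi := fun p => {w | Fm.var p ∈ w.1}


/-!
The only axiom that produces a product `X ⊗ Y` is Combination, which speaks about
strong dilemmas. A weak dilemma `⟪C:X⟫_s` is a disjunction of strong dilemmas `[C:Z]_s` over the
nonempty sublists `Z` of `X`; combining any two disjuncts `[C:Z]_s`, `[C:W]_s` gives `⟪C:Z⊗W⟫_s`,
and since `Z ⊗ W` is a sublist of `X ⊗ Y`, every disjunct of that is a disjunct of `⟪C:X⊗Y⟫_s`.
This handles two factors; `n` factors follow by induction along the left-associated product, and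
`n = 0` is Necessitation applied to `⊤`.
-/

namespace Fm

open scoped List

variable {A : Type}

structure IsValuation (v : Fm A → Bool) : Prop where
  eval_neg : ∀ ψ, v (neg ψ) = !v ψ
  eval_imp : ∀ ψ χ, v (imp ψ χ) = (!v ψ || v χ)

theorem tautology_iff {φ : Fm A} : Tautology φ ↔ ∀ v, IsValuation v → v φ = true :=
  ⟨fun h v hv => h v hv.eval_neg hv.eval_imp, fun h v hn hi => h v ⟨hn, hi⟩⟩

namespace IsValuation

variable {v : Fm A → Bool}

theorem eval_top (hv : IsValuation v) : v (top : Fm A) = true := by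
  simp [top, hv.eval_imp]

theorem eval_bot (hv : IsValuation v) : v (bot : Fm A) = false := by
  simp [bot, hv.eval_neg, hv.eval_top]

theorem eval_conj (hv : IsValuation v) (φ ψ : Fm A) : v (conj φ ψ) = (v φ && v ψ) := by
  simp [conj, hv.eval_neg, hv.eval_imp]

theorem eval_disj (hv : IsValuation v) (φ ψ : Fm A) : v (disj φ ψ) = (v φ || v ψ) := by
  simp [disj, hv.eval_neg, hv.eval_imp]

theorem eval_bigOr (hv : IsValuation v) (L : List (Fm A)) : v (bigOr L) = L.any v := by
  induction L with
  | nil => simp [bigOr, hv.eval_bot]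
  | cons φ L ih => simp [bigOr, hv.eval_disj, ih]

theorem eval_wdil (hv : IsValuation v) (C : Set A) (X : List (Fm A)) (s : A → ℝ) :
    v (wdil C X s) = true ↔ ∃ Z, Z <+ X ∧ Z ≠ [] ∧ v (dil C Z s) = true := by
  simp [wdil, hv.eval_bigOr]

end IsValuation

theorem tautology_imp {φ ψ : Fm A} (h : ∀ v, IsValuation v → v φ = true → v ψ = true) :
    Tautology (imp φ ψ) :=
  tautology_iff.2 fun v hv => by
    cases hφ : v φ <;> simp [hv.eval_imp, hφ, h v hv]

theorem tautology_dil_imp_wdil {C : Set A} {s : A → ℝ} {X Z : List (Fm A)} (hZX : Z <+ X)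
    (hZ : Z ≠ []) : Tautology (imp (dil C Z s) (wdil C X s)) :=
  tautology_imp fun _ hv hZv => (hv.eval_wdil C X s).2 ⟨Z, hZX, hZ, hZv⟩

theorem tautology_wdil_imp_wdil {C : Set A} {s : A → ℝ} {X Y : List (Fm A)} (hXY : X <+ Y) :
    Tautology (imp (wdil C X s) (wdil C Y s)) :=
  tautology_imp fun v hv hXv => by
    obtain ⟨Z, hZX, hZ, hZv⟩ := (hv.eval_wdil C X s).1 hXv
    exact (hv.eval_wdil C Y s).2 ⟨Z, hZX.trans hXY, hZ, hZv⟩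

theorem Derives.of_imp_valid {φ ψ : Fm A} (hφ : Derives φ)
    (h : ∀ v, IsValuation v → v φ = true → v ψ = true) : Derives ψ :=
  .mp hφ (.taut (tautology_imp h))

theorem Derives.of_imp_valid₂ {φ ψ χ : Fm A} (hφ : Derives φ) (hψ : Derives ψ)
    (h : ∀ v, IsValuation v → v φ = true → v ψ = true → v χ = true) : Derives χ :=
  .mp hψ (.of_imp_valid hφ fun v hv hφv => by
    cases hψv : v ψ <;> simp [hv.eval_imp, hψv, h v hv hφv])

theorem Derives.imp_comm {φ ψ χ : Fm A} (h : Derives (imp φ (imp ψ χ))) :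
    Derives (imp ψ (imp φ χ)) :=
  h.of_imp_valid fun v hv => by
    simp only [hv.eval_imp]
    grind

theorem Derives.bigOr_imp {G : Fm A} {L : List (Fm A)} (h : ∀ φ ∈ L, Derives (imp φ G)) :
    Derives (imp (bigOr L) G) := by
  induction L with
  | nil => exact .taut (tautology_imp fun _ hv => by simp [bigOr, hv.eval_bot])
  | cons φ L ih =>
    refine .of_imp_valid₂ (h φ (by simp)) (ih fun ψ hψ => h ψ (by simp [hψ])) fun v hv => ?_
    simp only [bigOr, hv.eval_imp, hv.eval_disj]
    grind

theorem Derives.wdil_imp {C : Set A} {s : A → ℝ} {X : List (Fm A)} {G : Fm A}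
    (h : ∀ Z, Z <+ X → Z ≠ [] → Derives (imp (dil C Z s) G)) : Derives (imp (wdil C X s) G) :=
  .bigOr_imp fun φ hφ => by
    simp only [List.mem_map, List.mem_filter, List.mem_sublists] at hφ
    obtain ⟨Z, ⟨hZX, hZ⟩, rfl⟩ := hφ
    exact h Z hZX (by simpa using hZ)

theorem otimes_sublist_otimes {X Y Z W : List (Fm A)} (hZX : Z <+ X) (hWY : W <+ Y) :
    otimes Z W <+ otimes X Y := by
  induction hZX with
  | slnil => simp [Fm.otimes]
  | cons φ _ ih => simpa [Fm.otimes] using ih.trans (List.sublist_append_right _ _)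
  | cons_cons φ _ ih => simpa [Fm.otimes] using (hWY.map _).append ih

theorem Derives.wdil_comb {C : Set A} (hC : C.Nonempty) (s : A → ℝ) (X Y : List (Fm A)) :
    Derives (imp (wdil C X s) (imp (wdil C Y s) (wdil C (otimes X Y) s))) := by
  refine .wdil_imp fun Z hZX hZ => .imp_comm (.wdil_imp fun W hWY hW => .imp_comm ?_)
  have hZW := Derives.comb (s := s) hC hZ hW
  have hmono := tautology_wdil_imp_wdil (C := C) (s := s) (otimes_sublist_otimes hZX hWY)
  refine .of_imp_valid hZW fun v hv hcomb => ?_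
  have := tautology_iff.1 hmono v hv
  simp only [hv.eval_imp] at this hcomb ⊢
  grind

theorem Derives.wdil_foldl_otimes {C : Set A} (hC : C.Nonempty) (s : A → ℝ)
    (Ys : List (List (Fm A))) (X : List (Fm A)) :
    Derives (imp (conj (wdil C X s) (bigAnd (Ys.map fun Y => wdil C Y s)))
      (wdil C (Ys.foldl otimes X) s)) := by
  induction Ys generalizing X with
  | nil => exact .taut (tautology_imp fun v hv => by simp_all [hv.eval_conj])
  | cons Y Ys ih =>
    refine .of_imp_valid₂ (wdil_comb hC s X Y) (ih (otimes X Y)) fun v hv => ?_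
    simp only [List.map_cons, List.foldl_cons, bigAnd, hv.eval_imp, hv.eval_conj]
    grind

theorem Derives.wdil_top {C : Set A} (hC : C.Nonempty) (s : A → ℝ) : Derives (wdil C [top] s) :=
  .mp (.nec hC (.taut (tautology_iff.2 fun _ hv => hv.eval_top)))
    (.taut (tautology_dil_imp_wdil (List.Sublist.refl _) (List.cons_ne_nil _ _)))

theorem Derives.bigAnd_wdil_imp_wdil_bigOtimes {C : Set A} (hC : C.Nonempty) (s : A → ℝ) :
    ∀ Xs : List (List (Fm A)),
      Derives (imp (bigAnd (Xs.map fun X => wdil C X s)) (wdil C (bigOtimes Xs) s))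
  | [] => (wdil_top hC s).of_imp_valid fun v hv h => by simp [bigOtimes, hv.eval_imp, h]
  | X :: Ys => wdil_foldl_otimes hC s Ys X

end Fm

theorem wdil_otimes_general {A : Type} (C : Set A) (hC : C.Nonempty)
    (s : A → ℝ) (n : ℕ) (X : Fin n → List (Fm A)) :
    Fm.Derives (Fm.imp (Fm.bigAnd ((List.ofFn X).map fun Xi => Fm.wdil C Xi s))
      (Fm.wdil C (Fm.bigOtimes (List.ofFn X)) s)) :=
  Fm.Derives.bigAnd_wdil_imp_wdil_bigOtimes hC s (List.ofFn X)

/-- For `n ≥ 0`: `⊢ ⋀_{i ≤ n} ⟪C:Xᵢ⟫_s → ⟪C:X₁⊗X₂⊗⋯⊗Xₙ⟫_s`, where the big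
`⊗` is left-associated, is `X₁` for `n = 1`, and is `{⊤}` for `n = 0`. -/
theorem wdil_otimes {A : Type} [Nonempty A] (C : Set A) (hC : C.Nonempty)
    (s : A → ℝ) (n : ℕ) (X : Fin n → List (Fm A)) (hX : ∀ i, X i ≠ []) :
    Fm.Derives (Fm.imp (Fm.bigAnd ((List.ofFn X).map fun Xi => Fm.wdil C Xi s))
      (Fm.wdil C (Fm.bigOtimes (List.ofFn X)) s)) :=
  wdil_otimes_general C hC s n X
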